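/- arXiv:2404.04950 — 5 statements merged into one kernel-verified Lean document; each statement's English description precedes it below -/
import Mathlib

section
/- Consider the nondimensional phase-field system on a bounded domain Ω ⊂ ℝ³ with smooth boundary: smooth fields v (velocity), ψ (phase variable) and μ_c (chemical potential) satisfy ∇·v = (α/Pe_ψ) ∇·(m_ψ ∇μ_c) and ∂ψ/∂t + ∇·(ψ v) = (1/Pe_ψ) ∇·(m_ψ ∇μ_c) on Ω for all t ≥ 0, together with the boundary conditions v = 0 and n·∇μ_c = 0 on ∂Ω. Then the total mass is conserved: d/dt ∫_Ω ρ dx = 0 for all t, where ρ = ψ + ζ_ρ(1−ψ). -/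
noncomputable section
open scoped BigOperators
open MeasureTheory

/-- `i`-th spatial partial derivative of a scalar field on `ℝ³`. -/
def pd3 (i : Fin 3) (f : (Fin 3 → ℝ) → ℝ) (x : Fin 3 → ℝ) : ℝ :=
  fderiv ℝ f x (Pi.single i 1)

/-- Spatial gradient. -/
def grad3 (f : (Fin 3 → ℝ) → ℝ) (x : Fin 3 → ℝ) : Fin 3 → ℝ := fun i => pd3 i f x

/-- Euclidean dot product on `ℝ³`. -/
def dot3 (a b : Fin 3 → ℝ) : ℝ := ∑ i, a i * b i

/-- Divergence of a vector field on `ℝ³`. -/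
def div3 (u : (Fin 3 → ℝ) → Fin 3 → ℝ) (x : Fin 3 → ℝ) : ℝ :=
  ∑ i, pd3 i (fun y => u y i) x

/-- A nonempty bounded connected component of an open set `U ⊆ ℝ` is an open interval
with endpoints in the frontier of `U`. -/
lemma comp_eq_Ioo {U : Set ℝ} (hU : IsOpen U) (hb : Bornology.IsBounded U)
    {x₀ : ℝ} (hx₀ : x₀ ∈ U) :
    ∃ a b : ℝ, a < b ∧ connectedComponentIn U x₀ = Set.Ioo a b ∧
      a ∈ frontier U ∧ b ∈ frontier U := by
  set C := connectedComponentIn U x₀ with hC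
  have hCopen : IsOpen C := hU.connectedComponentIn
  have hCsub : C ⊆ U := connectedComponentIn_subset U x₀
  have hCne : x₀ ∈ C := mem_connectedComponentIn hx₀
  have hCb : Bornology.IsBounded C := hb.subset hCsub
  have hpc : IsPreconnected C := isPreconnected_connectedComponentIn
  have hbdd : BddBelow C := hCb.bddBelow
  have hbdda : BddAbove C := hCb.bddAbove
  set a := sInf C with ha
  set b := sSup C with hbdef
  have hne : C.Nonempty := ⟨x₀, hCne⟩
  have haleb : ∀ y ∈ C, a ≤ y ∧ y ≤ b := fun y hy => ⟨csInf_le hbdd hy, le_csSup hbdda hy⟩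
  have hanotC : a ∉ C := by
    intro haC
    rcases Metric.isOpen_iff.1 hCopen a haC with ⟨ε, hε, hball⟩
    have : a - ε / 2 ∈ C := by
      apply hball
      rw [Metric.mem_ball, Real.dist_eq]
      rw [abs_of_nonpos (by linarith)]
      linarith
    linarith [(haleb _ this).1]
  have hbnotC : b ∉ C := by
    intro hbC
    rcases Metric.isOpen_iff.1 hCopen b hbC with ⟨ε, hε, hball⟩
    have : b + ε / 2 ∈ C := by
      apply hball
      rw [Metric.mem_ball, Real.dist_eq]
      rw [abs_of_nonneg (by linarith)]
      linarith
    linarith [(haleb _ this).2]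
  have hIooC : Set.Ioo a b ⊆ C := by
    intro y hy
    obtain ⟨c, hcC, hcy⟩ := exists_lt_of_csInf_lt hne hy.1
    obtain ⟨c', hc'C, hyc'⟩ := exists_lt_of_lt_csSup hne hy.2
    exact hpc.ordConnected.out hcC hc'C ⟨hcy.le, hyc'.le⟩
  have hCIoo : C = Set.Ioo a b := by
    apply Set.Subset.antisymm _ hIooC
    intro y hy
    rcases haleb y hy with ⟨h1, h2⟩
    rcases h1.lt_or_eq with h | h
    · rcases h2.lt_or_eq with h' | h'
      · exact ⟨h, h'⟩
      · exact absurd (h' ▸ hy) hbnotC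
    · exact absurd (h ▸ hy) hanotC
  have hab : a < b := by
    rcases haleb _ hCne with ⟨h1, h2⟩
    rcases (h1.trans h2).lt_or_eq with h | h
    · exact h
    · exfalso; apply hanotC
      have : x₀ = a := le_antisymm (h ▸ h2) h1
      exact this ▸ hCne
  refine ⟨a, b, hab, hCIoo, ?_, ?_⟩
  · constructor
    · exact closure_mono hCsub (hCIoo ▸ (by simp [closure_Ioo hab.ne, hab.le] : a ∈ closure (Set.Ioo a b)))
    · -- a ∉ interior U = U
      rw [hU.interior_eq]
      intro haU
      rcases Metric.isOpen_iff.1 hU a haU with ⟨ε, hε, hball⟩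
      set ε' := min (ε/2) (b - a) with hε'
      have hε'pos : 0 < ε' := lt_min (by linarith) (by linarith)
      have hsub : Set.Ioo (a - ε') b ⊆ U := by
        intro y hy
        rcases lt_or_ge y (a + ε') with h | h
        · apply hball
          rw [Metric.mem_ball, Real.dist_eq, abs_lt]
          constructor
          · have : -(ε/2) ≤ -ε' := by simp [hε']
            nlinarith [min_le_left (ε/2) (b-a), hy.1]
          · nlinarith [min_le_left (ε/2) (b-a)]
        · exact hCsub (hIooC ⟨by nlinarith [min_le_right (ε/2) (b-a)], hy.2⟩)
      have hpre : IsPreconnected (Set.Ioo (a - ε') b) := isPreconnected_Ioo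
      have hx₀mem : x₀ ∈ Set.Ioo (a - ε') b := by
        have := hCIoo ▸ hCne
        exact ⟨by linarith [this.1], this.2⟩
      have := hpre.subset_connectedComponentIn hx₀mem hsub
      exact hanotC (this ⟨by linarith, hab⟩)
  · constructor
    · exact closure_mono hCsub (hCIoo ▸ (by simp [closure_Ioo hab.ne, hab.le] : b ∈ closure (Set.Ioo a b)))
    · rw [hU.interior_eq]
      intro hbU
      rcases Metric.isOpen_iff.1 hU b hbU with ⟨ε, hε, hball⟩
      set ε' := min (ε/2) (b - a) with hε'
      have hε'pos : 0 < ε' := lt_min (by linarith) (by linarith)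
      have hsub : Set.Ioo a (b + ε') ⊆ U := by
        intro y hy
        rcases lt_or_ge (b - ε') y with h | h
        · apply hball
          rw [Metric.mem_ball, Real.dist_eq, abs_lt]
          constructor
          · nlinarith [min_le_left (ε/2) (b-a)]
          · nlinarith [min_le_left (ε/2) (b-a), hy.2]
        · exact hCsub (hIooC ⟨hy.1, by nlinarith [min_le_right (ε/2) (b-a)]⟩)
      have hpre : IsPreconnected (Set.Ioo a (b + ε')) := isPreconnected_Ioo
      have hx₀mem : x₀ ∈ Set.Ioo a (b + ε') := by
        have := hCIoo ▸ hCne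
        exact ⟨this.1, by linarith [this.2]⟩
      have := hpre.subset_connectedComponentIn hx₀mem hsub
      exact hbnotC (this ⟨hab, by linarith⟩)

lemma oneD_integral_zero {U : Set ℝ} (hU : IsOpen U) (hb : Bornology.IsBounded U)
    {f f' : ℝ → ℝ} (hf : ∀ s, HasDerivAt f (f' s) s) (hf' : Continuous f')
    (h0 : ∀ s ∈ frontier U, f s = 0) : ∫ s in U, f' s = 0 := by
  -- family of connected components
  set Fam : Set (Set ℝ) := {C | ∃ x ∈ U, C = connectedComponentIn U x} with hFam
  -- integrability
  have hint : IntegrableOn f' U := by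
    have hcm : IsCompact (closure U) := hb.isCompact_closure
    exact (hf'.continuousOn.integrableOn_compact hcm).mono_set subset_closure
  -- countability of the family
  have hcble : Fam.Countable := by
    have hinj : ∀ C ∈ Fam, ∃ q : ℚ, (q : ℝ) ∈ C := by
      rintro C ⟨x, hx, rfl⟩
      obtain ⟨a, b, hab, hC, -, -⟩ := comp_eq_Ioo hU hb hx
      obtain ⟨q, hq1, hq2⟩ := exists_rat_btwn hab
      exact ⟨q, hC ▸ ⟨hq1, hq2⟩⟩
    choose r hr using hinj
    have : Set.InjOn (fun C : Fam => r C C.2) Set.univ := by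
      rintro ⟨C, hC⟩ - ⟨C', hC'⟩ - h
      simp only at h
      obtain ⟨x, hx, rfl⟩ := hC
      obtain ⟨x', hx', rfl⟩ := hC'
      have h1 := hr _ ⟨x, hx, rfl⟩
      have h2 := hr _ ⟨x', hx', rfl⟩
      rw [h] at h1
      simp only [Subtype.mk.injEq]
      exact (connectedComponentIn_eq h1).trans (connectedComponentIn_eq h2).symm
    have : Countable Fam := by
      have := Set.injOn_univ.1 this
      exact Function.Injective.countable (β := ℚ) this
    exact Set.countable_coe_iff.mp this
  haveI : Countable Fam := hcble.to_subtype
  -- union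
  have hUnion : (⋃ C : Fam, (C : Set ℝ)) = U := by
    apply Set.Subset.antisymm
    · rintro y hy
      simp only [Set.mem_iUnion] at hy
      obtain ⟨⟨C, x, hx, rfl⟩, hyC⟩ := hy
      exact connectedComponentIn_subset U x hyC
    · intro y hy
      exact Set.mem_iUnion.2 ⟨⟨_, y, hy, rfl⟩, mem_connectedComponentIn hy⟩
  -- measurability and disjointness
  have hmeas : ∀ C : Fam, MeasurableSet (C : Set ℝ) := by
    rintro ⟨C, x, hx, rfl⟩
    exact hU.connectedComponentIn.measurableSet
  have hdisj : Pairwise (Function.onFun Disjoint (fun C : Fam => (C : Set ℝ))) := by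
    rintro ⟨C, x, hx, rfl⟩ ⟨C', x', hx', rfl⟩ hne
    rw [Function.onFun]
    simp only
    rw [Set.disjoint_left]
    intro z hz hz'
    apply hne
    simp only [Subtype.mk.injEq]
    exact (connectedComponentIn_eq hz).trans (connectedComponentIn_eq hz').symm
  have := MeasureTheory.integral_iUnion (μ := volume) (f := f') hmeas hdisj (hUnion ▸ hint)
  rw [← hUnion, this]
  -- each component contributes 0
  have hzero : ∀ C : Fam, ∫ s in (C : Set ℝ), f' s = 0 := by
    rintro ⟨C, x, hx, rfl⟩
    obtain ⟨a, b, hab, hC, hafr, hbfr⟩ := comp_eq_Ioo hU hb hx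
    simp only [hC]
    rw [← MeasureTheory.integral_Ioc_eq_integral_Ioo,
      ← intervalIntegral.integral_of_le hab.le]
    rw [intervalIntegral.integral_eq_sub_of_hasDerivAt (fun s _ => hf s)
      (hf'.intervalIntegrable a b)]
    rw [h0 a hafr, h0 b hbfr, sub_zero]
  simp only [hzero, tsum_zero]

lemma slice_pd3_zero {Ω : Set (Fin 3 → ℝ)} (hΩopen : IsOpen Ω)
    (hΩbdd : Bornology.IsBounded Ω) (i : Fin 3) {G : (Fin 3 → ℝ) → ℝ}
    (hG : ContDiff ℝ (⊤ : ℕ∞) G) (h0 : ∀ x ∈ frontier Ω, G x = 0) :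
    ∫ x in Ω, pd3 i G x = 0 := by
  set g : (Fin 3 → ℝ) → ℝ := fun x => fderiv ℝ G x (Pi.single i 1) with hg
  have hgc : Continuous g := (hG.continuous_fderiv (by simp)).clm_apply continuous_const
  have hgint : IntegrableOn g Ω := by
    have hcm : IsCompact (closure Ω) := hΩbdd.isCompact_closure
    exact (hgc.continuousOn.integrableOn_compact hcm).mono_set subset_closure
  have hpd : ∀ x, pd3 i G x = g x := fun x => rfl
  simp only [hpd]
  set h : (Fin 3 → ℝ) → ℝ := Ω.indicator g with hdef
  have hhint : Integrable h := (integrable_indicator_iff hΩopen.measurableSet).2 hgint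
  rw [← MeasureTheory.integral_indicator hΩopen.measurableSet, ← hdef]
  -- move to the product space
  set e := MeasurableEquiv.piFinSuccAbove (fun _ : Fin 3 => ℝ) i with he
  have hmp : MeasurePreserving e volume volume :=
    volume_preserving_piFinSuccAbove (fun _ : Fin 3 => ℝ) i
  have hsymm : MeasurePreserving e.symm volume volume := hmp.symm
  have hcomp : ∫ z, h (e.symm z) = ∫ y, h y :=
    hsymm.integral_comp e.symm.measurableEmbedding h
  rw [← hcomp]
  have hintc : Integrable (fun z => h (e.symm z)) volume :=
    (hsymm.integrable_comp_emb e.symm.measurableEmbedding).2 hhint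
  rw [MeasureTheory.Measure.volume_eq_prod] at hintc ⊢
  rw [MeasureTheory.integral_prod_symm _ hintc]
  -- inner integral vanishes for every w
  have hinner : ∀ w : Fin 2 → ℝ, (∫ s : ℝ, h (e.symm (s, w))) = 0 := by
    intro w
    have hesymm : ∀ s : ℝ, e.symm (s, w) = i.insertNth s w := fun s => rfl
    set φ : ℝ → (Fin 3 → ℝ) := fun s => i.insertNth s w with hφ
    set c : Fin 3 → ℝ := i.insertNth 0 w with hc
    set d : Fin 3 → ℝ := Pi.single i 1 with hd
    have hφaff : ∀ s, φ s = c + s • d := by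
      intro s
      funext j
      refine Fin.succAboveCases i ?_ ?_ j
      · simp [hφ, hc, hd]
      · intro j
        simp [hφ, hc, hd, Fin.insertNth_apply_succAbove,
          Pi.single_eq_of_ne (Fin.succAbove_ne i j)]
    have hφcont : Continuous φ := by
      have : Continuous fun s : ℝ => c + s • d :=
        continuous_const.add (continuous_id.smul continuous_const)
      convert this using 1
      funext s; exact hφaff s
    have hφder : ∀ s, HasDerivAt φ (Pi.single i 1) s := by
      intro s
      have h1 := (hasDerivAt_const s c).add ((hasDerivAt_id s).smul_const d)
      simp only [zero_add, one_smul, id_eq] at h1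
      exact h1.congr_of_eventuallyEq (Filter.Eventually.of_forall fun s => hφaff s)
    set U : Set ℝ := φ ⁻¹' Ω with hU
    have hUopen : IsOpen U := hΩopen.preimage hφcont
    have hUbdd : Bornology.IsBounded U := by
      obtain ⟨R, hR⟩ := hΩbdd.subset_closedBall 0
      apply (Metric.isBounded_closedBall (x := (0:ℝ)) (r := R)).subset
      intro s hs
      have h1 : φ s ∈ Metric.closedBall 0 R := hR hs
      simp only [Metric.mem_closedBall, dist_zero_right] at h1 ⊢
      calc |s| = ‖φ s i‖ := by rw [hφ]; simp
        _ ≤ ‖φ s‖ := norm_le_pi_norm (φ s) i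
        _ ≤ R := h1
    have hder : ∀ s, HasDerivAt (fun s => G (φ s)) (g (φ s)) s := fun s =>
      ((hG.differentiable (by simp)) (φ s)).hasFDerivAt.comp_hasDerivAt s (hφder s)
    have hfr : ∀ s ∈ frontier U, G (φ s) = 0 := fun s hs =>
      h0 _ (hφcont.frontier_preimage_subset Ω hs)
    have h1d : ∫ s in U, g (φ s) = 0 :=
      oneD_integral_zero hUopen hUbdd hder (hgc.comp hφcont) hfr
    calc (∫ s : ℝ, h (e.symm (s, w))) = ∫ s : ℝ, U.indicator (fun s => g (φ s)) s := by
          congr 1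
      _ = ∫ s in U, g (φ s) := MeasureTheory.integral_indicator hUopen.measurableSet
      _ = 0 := h1d
  simp only [hinner, integral_zero]


/-- **Mass conservation for the nondimensional phase-field system.**
Smooth fields `v`, `ψ`, `μc` satisfying the quasi-incompressibility equation
`∇·v = (α/Pe_ψ) ∇·(m_ψ ∇μ_c)` and the phase equation
`∂ψ/∂t + ∇·(ψ v) = (1/Pe_ψ) ∇·(m_ψ ∇μ_c)` on a bounded open `Ω ⊂ ℝ³`
with boundary conditions `v = 0`, `n·∇μ_c = 0` on `∂Ω` conserve the total mass
`∫_Ω ρ dx`, where `ρ = ψ + ζ_ρ(1 − ψ)`. -/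
theorem mass_conservation
    (ζρ Peψ : ℝ) (hζρ : 0 < ζρ) (hPeψ : 0 < Peψ)
    (α : ℝ) (hα : α = (ζρ - 1) / ζρ)
    (Ω : Set (Fin 3 → ℝ)) (hΩopen : IsOpen Ω) (hΩbdd : Bornology.IsBounded Ω)
    (nv : (Fin 3 → ℝ) → Fin 3 → ℝ)   -- outward unit normal field on ∂Ω
    (v : ℝ → (Fin 3 → ℝ) → Fin 3 → ℝ)
    (ψ μc : ℝ → (Fin 3 → ℝ) → ℝ)
    (hv : ∀ j, ContDiff ℝ (⊤ : ℕ∞) fun q : ℝ × (Fin 3 → ℝ) => v q.1 q.2 j)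
    (hψ : ContDiff ℝ (⊤ : ℕ∞) (Function.uncurry ψ))
    (hμc : ContDiff ℝ (⊤ : ℕ∞) (Function.uncurry μc))
    (mψ : ℝ → (Fin 3 → ℝ) → ℝ)
    (hmψ : ∀ t x, mψ t x = |ψ t x * (1 - ψ t x)|)
    (hquasi : ∀ t, 0 ≤ t → ∀ x ∈ Ω,
      div3 (v t) x = (α / Peψ) * div3 (fun y => mψ t y • grad3 (μc t) y) x)
    (hphase : ∀ t, 0 ≤ t → ∀ x ∈ Ω,
      deriv (fun s => ψ s x) t + div3 (fun y => ψ t y • v t y) x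
        = (1 / Peψ) * div3 (fun y => mψ t y • grad3 (μc t) y) x)
    (hbc : ∀ t, 0 ≤ t → ∀ x ∈ frontier Ω,
      v t x = 0 ∧ dot3 (nv x) (grad3 (μc t) x) = 0) :
    ∀ t, 0 ≤ t →
      deriv (fun s => ∫ x in Ω, (ψ s x + ζρ * (1 - ψ s x))) t = 0 := by
  intro t ht
  have hΩmeas : MeasurableSet Ω := hΩopen.measurableSet
  -- smoothness of slices
  have hψt : ∀ s, ContDiff ℝ (⊤ : ℕ∞) (ψ s) := fun s =>
    hψ.comp (contDiff_const.prodMk contDiff_id)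
  have hvt : ∀ s i, ContDiff ℝ (⊤ : ℕ∞) (fun y => v s y i) := fun s i =>
    (hv i).comp (contDiff_const.prodMk contDiff_id)
  -- time derivative of ψ
  set dψ : ℝ → (Fin 3 → ℝ) → ℝ :=
    fun s x => fderiv ℝ (Function.uncurry ψ) (s, x) (1, 0) with hdψ
  have hψs_deriv : ∀ s x, HasDerivAt (fun s' => ψ s' x) (dψ s x) s := by
    intro s x
    have h1 : HasDerivAt (fun s' : ℝ => (s', x)) ((1 : ℝ), (0 : Fin 3 → ℝ)) s :=
      (hasDerivAt_id s).prodMk (hasDerivAt_const s x)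
    exact ((hψ.differentiable (by simp) (s, x)).hasFDerivAt).comp_hasDerivAt s h1
  -- the integrand and its time derivative
  set F : ℝ → (Fin 3 → ℝ) → ℝ := fun s x => ψ s x + ζρ * (1 - ψ s x) with hF
  set F' : ℝ → (Fin 3 → ℝ) → ℝ := fun s x => (1 - ζρ) * dψ s x with hF'
  have hFderiv : ∀ s x, HasDerivAt (fun s' => F s' x) (F' s x) s := by
    intro s x
    have h2 : HasDerivAt (fun s' => ζρ * (1 - ψ s' x)) (ζρ * (0 - dψ s x)) s :=
      ((hasDerivAt_const s (1 : ℝ)).sub (hψs_deriv s x)).const_mul ζρ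
    have h3 := (hψs_deriv s x).add h2
    refine h3.congr_deriv ?_
    show dψ s x + ζρ * (0 - dψ s x) = (1 - ζρ) * dψ s x
    ring
  -- continuity of dψ
  have hdψc : Continuous (Function.uncurry dψ) := by
    have : Continuous (fderiv ℝ (Function.uncurry ψ)) := hψ.continuous_fderiv (by simp)
    exact (this.comp continuous_id).clm_apply continuous_const
  have hdψc' : Continuous fun p : ℝ × (Fin 3 → ℝ) => dψ p.1 p.2 := by
    exact hdψc
  have hdψs : ∀ s, Continuous (dψ s) := fun s =>
    hdψc'.comp (continuous_const.prodMk continuous_id)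
  have hFc : ∀ s, Continuous (F s) := fun s =>
    (hψt s).continuous.add (continuous_const.mul (continuous_const.sub (hψt s).continuous))
  have hF'c : ∀ s, Continuous (F' s) := fun s => continuous_const.mul (hdψs s)
  -- bound on a compact set
  obtain ⟨M, hM⟩ := ((isCompact_closedBall t 1).prod hΩbdd.isCompact_closure).exists_bound_of_continuousOn
    (f := fun p : ℝ × (Fin 3 → ℝ) => F' p.1 p.2)
    (continuous_const.mul hdψc').continuousOn
  -- Leibniz rule
  have hleib := hasDerivAt_integral_of_dominated_loc_of_deriv_le
    (μ := volume.restrict Ω) (F := F) (F' := F') (x₀ := t)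
    (bound := fun _ => M) (Metric.ball_mem_nhds t one_pos)
    (Filter.Eventually.of_forall fun s => (hFc s).aestronglyMeasurable)
    (by
      have hcm : IsCompact (closure Ω) := hΩbdd.isCompact_closure
      exact (((hFc t).continuousOn).integrableOn_compact hcm).mono_set subset_closure)
    ((hF'c t).aestronglyMeasurable)
    (by
      refine (MeasureTheory.ae_restrict_iff' hΩmeas).2 (Filter.Eventually.of_forall ?_)
      intro x hx s hs
      have : ((s, x) : ℝ × (Fin 3 → ℝ)) ∈ Metric.closedBall t 1 ×ˢ closure Ω :=
        ⟨Metric.mem_closedBall.2 (le_of_lt (Metric.mem_ball.1 hs)), subset_closure hx⟩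
      exact hM _ this)
    (MeasureTheory.integrableOn_const hΩbdd.measure_lt_top.ne)
    (Filter.Eventually.of_forall fun x s _ => hFderiv s x)
  have hderiv_eq : deriv (fun s => ∫ x in Ω, (ψ s x + ζρ * (1 - ψ s x))) t
      = ∫ x in Ω, F' t x := hleib.2.deriv
  rw [hderiv_eq]
  -- the key pointwise identity on Ω
  set Ft : (Fin 3 → ℝ) → (Fin 3 → ℝ) := fun y => (ψ t y + ζρ * (1 - ψ t y)) • v t y with hFt
  have hkey : ∀ x ∈ Ω, F' t x = - div3 Ft x := by
    intro x hx
    have hd := (hψs_deriv t x).deriv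
    have hq := hquasi t ht x hx
    have hp := hphase t ht x hx
    rw [hd] at hp
    set D := div3 (fun y => mψ t y • grad3 (μc t) y) x with hD
    -- linearity of div3
    have hlin : div3 Ft x = ζρ * div3 (v t) x
        + (1 - ζρ) * div3 (fun y => ψ t y • v t y) x := by
      simp only [div3, hFt, Pi.smul_apply, smul_eq_mul, Finset.mul_sum,
        ← Finset.sum_add_distrib]
      refine Finset.sum_congr rfl fun i _ => ?_
      have hP : Differentiable ℝ (ψ t) := (hψt t).differentiable (by simp)
      have hV : Differentiable ℝ (fun y => v t y i) := (hvt t i).differentiable (by simp)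
      have hfun : (fun y => (ψ t y + ζρ * (1 - ψ t y)) * v t y i)
          = fun y => ζρ * v t y i + (1 - ζρ) * (ψ t y * v t y i) := by
        funext y; ring
      rw [pd3, pd3, pd3, hfun]
      rw [fderiv_fun_add ((hV x).const_mul ζρ)
            (((hP x).fun_mul (hV x)).const_mul (1 - ζρ))]
      rw [fderiv_const_mul (hV x), fderiv_const_mul ((hP x).fun_mul (hV x))]
      simp
    have hψv : div3 (fun y => ψ t y • v t y) x = (1 / Peψ) * D - dψ t x := by
      linarith
    have hPe' : Peψ ≠ 0 := ne_of_gt hPeψ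
    have hζ' : ζρ ≠ 0 := ne_of_gt hζρ
    rw [hlin, hq, hψv, hα]
    simp only [hF']
    field_simp
    ring
  -- conclude by the divergence structure
  have hkey' : Set.EqOn (F' t) (fun x => - div3 Ft x) Ω := fun x hx => hkey x hx
  rw [MeasureTheory.setIntegral_congr_fun hΩmeas hkey', MeasureTheory.integral_neg, neg_eq_zero]
  have hGi : ∀ i : Fin 3,
      ContDiff ℝ (⊤ : ℕ∞) (fun y => (ψ t y + ζρ * (1 - ψ t y)) * v t y i) := fun i =>
    ((hψt t).add (contDiff_const.mul (contDiff_const.sub (hψt t)))).mul (hvt t i)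
  have hzero : ∀ i : Fin 3, ∀ x ∈ frontier Ω,
      (ψ t x + ζρ * (1 - ψ t x)) * v t x i = 0 := by
    intro i x hxf
    rw [(hbc t ht x hxf).1]
    simp
  have heq : ∀ i : Fin 3, (fun y => Ft y i)
      = fun y => (ψ t y + ζρ * (1 - ψ t y)) * v t y i := fun i => rfl
  have hint : ∀ i : Fin 3,
      IntegrableOn (fun x => pd3 i (fun y => Ft y i) x) Ω := by
    intro i
    rw [heq i]
    have hc : Continuous fun x =>
        pd3 i (fun y => (ψ t y + ζρ * (1 - ψ t y)) * v t y i) x :=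
      ((hGi i).continuous_fderiv (by simp)).clm_apply continuous_const
    exact (hc.continuousOn.integrableOn_compact hΩbdd.isCompact_closure).mono_set
      subset_closure
  simp only [div3]
  rw [MeasureTheory.integral_finset_sum _ (fun i _ => hint i)]
  apply Finset.sum_eq_zero
  intro i _
  rw [heq i]
  exact slice_pd3_zero hΩopen hΩbdd i (hGi i) (hzero i)
end
end

section
/- Consider one step of the time-discrete scheme on a bounded domain Ω ⊂ ℝ³ with smooth boundary: smooth spatial fields vⁿ, ψⁿ, ψ^{n+1}, μ_c^{n+1} satisfy ∇·vⁿ = (α/Pe_ψ) ∇·(m_ψⁿ ∇μ_c^{n+1}) and (ψ^{n+1} − ψⁿ)/δt + ∇·(ψ^{n+1} vⁿ) = (1/Pe_ψ) ∇·(m_ψⁿ ∇μ_c^{n+1}) on Ω, with boundary conditions vⁿ = 0 and n·∇μ_c^{n+1} = 0 on ∂Ω, where δt > 0 is the time step. Then the temporal discrete mass conservation holds: ∫_Ω (ρ^{n+1} − ρⁿ)/δt dx = 0, where ρᵐ = ψᵐ + ζ_ρ(1 − ψᵐ). -/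
noncomputable section
open scoped BigOperators
open MeasureTheory

section Helpers

open Set

/-- Continuous functions are integrable on bounded sets. -/
lemma integrableOn_of_isBounded {X : Type*} [NormedAddCommGroup X] [MeasureSpace X]
    [OpensMeasurableSpace X] [ProperSpace X] [SecondCountableTopology X]
    [IsLocallyFiniteMeasure (volume : Measure X)]
    {s : Set X} (hs : Bornology.IsBounded s) {f : X → ℝ} (hf : Continuous f) :
    IntegrableOn f s volume :=
  ((hf.locallyIntegrable).integrableOn_isCompact
    (Metric.isCompact_of_isClosed_isBounded isClosed_closure hs.closure)).mono_set
    subset_closure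

/-- The fundamental theorem of calculus on a bounded open subset of `ℝ`, for a
`C¹` function vanishing on the frontier. -/
lemma integral_deriv_eq_zero_of_isOpen {U : Set ℝ} (hU : IsOpen U)
    (hUb : Bornology.IsBounded U) {g : ℝ → ℝ} (hg : ContDiff ℝ (⊤ : ℕ∞) g)
    (hg0 : ∀ t ∈ frontier U, g t = 0) :
    ∫ t in U, deriv g t = 0 := by
  classical
  set C : Set (Set ℝ) := {s | ∃ x ∈ U, connectedComponentIn U x = s} with hCdef
  have hCopen : ∀ s ∈ C, IsOpen s := by
    rintro s ⟨x, hx, rfl⟩; exact hU.connectedComponentIn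
  have hCsub : ∀ s ∈ C, s ⊆ U := by
    rintro s ⟨x, hx, rfl⟩; exact connectedComponentIn_subset _ _
  have hCne : ∀ s ∈ C, s.Nonempty := by
    rintro s ⟨x, hx, rfl⟩; exact ⟨x, mem_connectedComponentIn hx⟩
  have hcomp : ∀ s ∈ C, ∀ z ∈ s, connectedComponentIn U z = s := by
    rintro s ⟨x, hx, rfl⟩ z hz; exact (connectedComponentIn_eq hz).symm
  have hCc : C.Countable := by
    have hex : ∀ s : C, ∃ q : ℚ, (q : ℝ) ∈ (s : Set ℝ) := fun s =>
      (Rat.denseRange_cast).exists_mem_open (hCopen s s.2) (hCne s s.2)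
    choose F hF using hex
    obtain ⟨e, he⟩ := Countable.exists_injective_nat ℚ
    refine Set.countable_iff_exists_injective.mpr ⟨e ∘ F, he.comp ?_⟩
    intro s t hst
    have h1 : (F s : ℝ) ∈ (s : Set ℝ) := hF s
    have h2 : (F s : ℝ) ∈ (t : Set ℝ) := by rw [hst]; exact hF t
    exact Subtype.ext ((hcomp s s.2 _ h1).symm.trans (hcomp t t.2 _ h2))
  haveI : Countable ↥C := hCc.to_subtype
  have hUnion : U = ⋃ s : C, (s : Set ℝ) := by
    apply Set.Subset.antisymm
    · intro x hx
      exact Set.mem_iUnion.mpr ⟨⟨connectedComponentIn U x, ⟨x, hx, rfl⟩⟩,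
        mem_connectedComponentIn hx⟩
    · exact Set.iUnion_subset fun s => hCsub s s.2
  have hdisj : Pairwise (Function.onFun Disjoint fun s : C => (s : Set ℝ)) := by
    intro s t hst
    refine Set.disjoint_left.mpr fun z hzs hzt => hst ?_
    exact Subtype.ext ((hcomp s s.2 z hzs).symm.trans (hcomp t t.2 z hzt))
  have hderivcont : Continuous (deriv g) := hg.continuous_deriv (by simp)
  have hint : IntegrableOn (deriv g) U := integrableOn_of_isBounded hUb hderivcont
  have hint2 : IntegrableOn (deriv g) (⋃ s : C, (s : Set ℝ)) := hUnion ▸ hint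
  rw [hUnion, integral_iUnion (s := fun s : C => (s : Set ℝ))
    (fun s => (hCopen s s.2).measurableSet) hdisj hint2]
  have hzero : ∀ s : C, ∫ t in (s : Set ℝ), deriv g t = 0 := by
    intro s
    have hso : IsOpen (s : Set ℝ) := hCopen s s.2
    have hsne : (s : Set ℝ).Nonempty := hCne s s.2
    have hssub : (s : Set ℝ) ⊆ U := hCsub s s.2
    have hsb : Bornology.IsBounded (s : Set ℝ) := hUb.subset hssub
    have hpre : IsPreconnected (s : Set ℝ) := by
      obtain ⟨x, hx, hxs⟩ := s.2
      rw [← hxs]; exact isPreconnected_connectedComponentIn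
    set a := sInf (s : Set ℝ) with ha
    set b := sSup (s : Set ℝ) with hb
    have hbdd_below := hsb.bddBelow
    have hbdd_above := hsb.bddAbove
    have hanotin : a ∉ (s : Set ℝ) := by
      intro hmem
      obtain ⟨ε, hε, hball⟩ := Metric.isOpen_iff.mp hso a hmem
      have hmem' : a - ε / 2 ∈ (s : Set ℝ) := by
        apply hball
        rw [Metric.mem_ball, Real.dist_eq]
        rw [show a - ε / 2 - a = -(ε / 2) by ring, abs_neg, abs_of_pos (by linarith)]
        linarith
      have := csInf_le hbdd_below hmem'
      rw [← ha] at this; linarith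
    have hbnotin : b ∉ (s : Set ℝ) := by
      intro hmem
      obtain ⟨ε, hε, hball⟩ := Metric.isOpen_iff.mp hso b hmem
      have hmem' : b + ε / 2 ∈ (s : Set ℝ) := by
        apply hball
        rw [Metric.mem_ball, Real.dist_eq]
        rw [show b + ε / 2 - b = ε / 2 by ring, abs_of_pos (by linarith)]
        linarith
      have := le_csSup hbdd_above hmem'
      rw [← hb] at this; linarith
    have hIoo : (s : Set ℝ) = Set.Ioo a b := by
      apply Set.Subset.antisymm
      · intro x hx
        refine ⟨lt_of_le_of_ne (csInf_le hbdd_below hx) ?_, lt_of_le_of_ne (le_csSup hbdd_above hx) ?_⟩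
        · intro h; exact hanotin (h ▸ hx)
        · intro h; exact hbnotin (h ▸ hx)
      · intro x hx
        obtain ⟨y, hy, hyx⟩ := exists_lt_of_csInf_lt hsne hx.1
        obtain ⟨z, hz, hxz⟩ := exists_lt_of_lt_csSup hsne hx.2
        exact (hpre.ordConnected).out hy hz ⟨hyx.le, hxz.le⟩
    have hafr : a ∈ frontier U := by
      have hacl : a ∈ closure (s : Set ℝ) := csInf_mem_closure hsne hbdd_below
      have haclU : a ∈ closure U := closure_mono hssub hacl
      have haU : a ∉ U := by
        intro haU
        have hto : IsOpen (connectedComponentIn U a) := hU.connectedComponentIn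
        have hmema : a ∈ connectedComponentIn U a := mem_connectedComponentIn haU
        obtain ⟨z, hzt, hzs⟩ := _root_.mem_closure_iff.mp hacl _ hto hmema
        have h1 : connectedComponentIn U a = connectedComponentIn U z :=
          connectedComponentIn_eq hzt
        have h2 : connectedComponentIn U z = (s : Set ℝ) := hcomp s s.2 z hzs
        have : a ∈ (s : Set ℝ) := by rw [← h2, ← h1]; exact hmema
        rw [hIoo] at this; exact lt_irrefl a this.1
      rw [hU.frontier_eq]; exact ⟨haclU, haU⟩
    have hbfr : b ∈ frontier U := by
      have hbcl : b ∈ closure (s : Set ℝ) := csSup_mem_closure hsne hbdd_above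
      have hbclU : b ∈ closure U := closure_mono hssub hbcl
      have hbU : b ∉ U := by
        intro hbU
        have hto : IsOpen (connectedComponentIn U b) := hU.connectedComponentIn
        have hmemb : b ∈ connectedComponentIn U b := mem_connectedComponentIn hbU
        obtain ⟨z, hzt, hzs⟩ := _root_.mem_closure_iff.mp hbcl _ hto hmemb
        have h1 : connectedComponentIn U b = connectedComponentIn U z :=
          connectedComponentIn_eq hzt
        have h2 : connectedComponentIn U z = (s : Set ℝ) := hcomp s s.2 z hzs
        have : b ∈ (s : Set ℝ) := by rw [← h2, ← h1]; exact hmemb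
        rw [hIoo] at this; exact lt_irrefl b this.2
      rw [hU.frontier_eq]; exact ⟨hbclU, hbU⟩
    have hab : a ≤ b := by
      obtain ⟨x, hx⟩ := hsne
      rw [hIoo] at hx
      exact (hx.1.trans hx.2).le
    rw [hIoo, ← integral_Ioc_eq_integral_Ioo, ← intervalIntegral.integral_of_le hab,
      intervalIntegral.integral_deriv_eq_sub
        (fun x _ => (hg.differentiable (by simp)).differentiableAt)
        (hderivcont.intervalIntegrable a b),
      hg0 b hbfr, hg0 a hafr, sub_zero]
  rw [tsum_congr hzero, tsum_zero]

lemma insertNth_eq_add_smul (i : Fin 3) (y : Fin 2 → ℝ) (t : ℝ) :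
    Fin.insertNth (α := fun _ => ℝ) i t y
      = Fin.insertNth (α := fun _ => ℝ) i 0 y + t • (Pi.single i 1 : Fin 3 → ℝ) := by
  funext j
  refine Fin.succAboveCases i ?_ ?_ j
  · simp
  · intro k
    simp [Fin.insertNth_apply_succAbove, Pi.single_eq_of_ne (Fin.succAbove_ne i k)]

/-- Divergence-type theorem for a single partial derivative: a smooth function
vanishing on the frontier of a bounded open set has vanishing integral of any
partial derivative over that set. -/
lemma setIntegral_pd3_eq_zero {Ω : Set (Fin 3 → ℝ)} (hΩo : IsOpen Ω)
    (hΩb : Bornology.IsBounded Ω) {f : (Fin 3 → ℝ) → ℝ} (hf : ContDiff ℝ (⊤ : ℕ∞) f)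
    (hf0 : ∀ x ∈ frontier Ω, f x = 0) (i : Fin 3) :
    ∫ x in Ω, pd3 i f x = 0 := by
  classical
  have hpdc : Continuous (pd3 i f) :=
    (hf.continuous_fderiv (by simp)).clm_apply continuous_const
  set G : (Fin 3 → ℝ) → ℝ := Ω.indicator (pd3 i f) with hG
  have hGint : Integrable G :=
    (integrable_indicator_iff hΩo.measurableSet).mpr (integrableOn_of_isBounded hΩb hpdc)
  set e : (ℝ × (Fin 2 → ℝ)) ≃ᵐ (Fin 3 → ℝ) :=
    (MeasurableEquiv.piFinSuccAbove (fun _ : Fin 3 => ℝ) i).symm with hedef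
  have hmp : MeasurePreserving e volume volume :=
    (volume_preserving_piFinSuccAbove (fun _ : Fin 3 => ℝ) i).symm _
  have he : ∀ p : ℝ × (Fin 2 → ℝ), e p = i.insertNth p.1 p.2 := fun p => rfl
  rw [← integral_indicator hΩo.measurableSet, ← hG, ← hmp.integral_comp']
  have hGe : Integrable (fun p : ℝ × (Fin 2 → ℝ) => G (e p)) volume :=
    (hmp.integrable_comp_emb e.measurableEmbedding).mpr hGint
  rw [Measure.volume_eq_prod] at hGe ⊢
  rw [MeasureTheory.integral_prod_symm _ hGe]
  have hinner : ∀ y : Fin 2 → ℝ, ∫ t : ℝ, G (e (t, y)) = 0 := by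
    intro y
    set c : ℝ → (Fin 3 → ℝ) := fun t => i.insertNth t y with hcdef
    have hcform : c = fun t =>
        Fin.insertNth (α := fun _ => ℝ) i 0 y + t • (Pi.single i 1 : Fin 3 → ℝ) :=
      funext fun t => insertNth_eq_add_smul i y t
    have hccd : ContDiff ℝ (⊤ : ℕ∞) c := by
      rw [hcform]; exact contDiff_const.add (contDiff_id.smul contDiff_const)
    have hccont : Continuous c := hccd.continuous
    set Uy : Set ℝ := c ⁻¹' Ω with hUydef
    have hUyo : IsOpen Uy := hΩo.preimage hccont
    have hUyb : Bornology.IsBounded Uy := by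
      obtain ⟨R, hR⟩ := Bornology.IsBounded.exists_norm_le hΩb
      refine isBounded_iff_forall_norm_le.mpr ⟨R, fun t ht => ?_⟩
      have h1 : c t i = t := by
        simp only [hcdef]
        exact Fin.insertNth_apply_same (α := fun _ => ℝ) i t y
      calc ‖t‖ = |c t i| := by rw [h1, Real.norm_eq_abs]
        _ ≤ ‖c t‖ := norm_le_pi_norm (c t) i
        _ ≤ R := hR _ ht
    have hgcd : ContDiff ℝ (⊤ : ℕ∞) (f ∘ c) := hf.comp hccd
    have hderiv : ∀ t, deriv (f ∘ c) t = pd3 i f (c t) := by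
      intro t
      have hc' : HasDerivAt c (Pi.single i 1) t := by
        rw [hcform]
        simpa using ((hasDerivAt_id t).smul_const (Pi.single i (1 : ℝ))).const_add
          (Fin.insertNth (α := fun _ => ℝ) i 0 y)
      exact ((hf.differentiable (by simp) (c t)).hasFDerivAt.comp_hasDerivAt t hc').deriv
    have hfr0 : ∀ t ∈ frontier Uy, (f ∘ c) t = 0 := by
      intro t ht
      rw [hUyo.frontier_eq] at ht
      have h1 : c t ∈ closure Ω := hccont.closure_preimage_subset Ω ht.1
      have h2 : c t ∉ Ω := ht.2
      exact hf0 _ (by rw [hΩo.frontier_eq]; exact ⟨h1, h2⟩)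
    have hfun : (fun t : ℝ => G (e (t, y))) = Uy.indicator (deriv (f ∘ c)) := by
      funext t
      have he' : e (t, y) = c t := rfl
      by_cases h : t ∈ Uy
      · have hΩm : c t ∈ Ω := h
        rw [he', hG, Set.indicator_of_mem hΩm, Set.indicator_of_mem h, hderiv t]
      · have hΩm : c t ∉ Ω := h
        rw [he', hG, Set.indicator_of_notMem hΩm, Set.indicator_of_notMem h]
    rw [hfun, integral_indicator hUyo.measurableSet]
    exact integral_deriv_eq_zero_of_isOpen hUyo hUyb hgcd hfr0
  simp only [hinner, integral_zero]

lemma pd3_mul_sub (i : Fin 3) (cst d : ℝ) (a b : (Fin 3 → ℝ) → ℝ)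
    (ha : ContDiff ℝ (⊤ : ℕ∞) a) (hb : ContDiff ℝ (⊤ : ℕ∞) b) (x : Fin 3 → ℝ) :
    pd3 i (fun y => cst * a y - d * b y) x = cst * pd3 i a x - d * pd3 i b x := by
  unfold pd3
  have ha' : DifferentiableAt ℝ a x := (ha.differentiable (by simp)).differentiableAt
  have hb' : DifferentiableAt ℝ b x := (hb.differentiable (by simp)).differentiableAt
  rw [fderiv_fun_sub (ha'.const_mul cst) (hb'.const_mul d), fderiv_const_mul ha',
    fderiv_const_mul hb']
  simp

end Helpers

/-- **Temporal discrete mass conservation for one step of the time-discrete scheme.**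
Smooth spatial fields `vⁿ, ψⁿ, ψ^{n+1}, μ_c^{n+1}` satisfying
`∇·vⁿ = (α/Pe_ψ) ∇·(m_ψⁿ ∇μ_c^{n+1})` and
`(ψ^{n+1} − ψⁿ)/δt + ∇·(ψ^{n+1} vⁿ) = (1/Pe_ψ) ∇·(m_ψⁿ ∇μ_c^{n+1})` on a
bounded open `Ω ⊂ ℝ³`, with `vⁿ = 0` and `n·∇μ_c^{n+1} = 0` on `∂Ω`, satisfy
`∫_Ω (ρ^{n+1} − ρⁿ)/δt dx = 0` where `ρᵐ = ψᵐ + ζ_ρ(1 − ψᵐ)`. -/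
theorem discrete_mass_conservation
    (ζρ Peψ δt : ℝ) (hζρ : 0 < ζρ) (hPeψ : 0 < Peψ) (hδt : 0 < δt)
    (α : ℝ) (hα : α = (ζρ - 1) / ζρ)
    (Ω : Set (Fin 3 → ℝ)) (hΩopen : IsOpen Ω) (hΩbdd : Bornology.IsBounded Ω)
    (nv : (Fin 3 → ℝ) → Fin 3 → ℝ)   -- outward unit normal field on ∂Ω
    (vn : (Fin 3 → ℝ) → Fin 3 → ℝ)
    (ψn ψ1 μc1 : (Fin 3 → ℝ) → ℝ)
    (hvn : ∀ j, ContDiff ℝ (⊤ : ℕ∞) fun x => vn x j)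
    (hψn : ContDiff ℝ (⊤ : ℕ∞) ψn) (hψ1 : ContDiff ℝ (⊤ : ℕ∞) ψ1) (hμc1 : ContDiff ℝ (⊤ : ℕ∞) μc1)
    (mψn : (Fin 3 → ℝ) → ℝ)
    (hmψn : ∀ x, mψn x = |ψn x * (1 - ψn x)|)
    (hquasi : ∀ x ∈ Ω,
      div3 vn x = (α / Peψ) * div3 (fun y => mψn y • grad3 μc1 y) x)
    (hphase : ∀ x ∈ Ω,
      (ψ1 x - ψn x) / δt + div3 (fun y => ψ1 y • vn y) x
        = (1 / Peψ) * div3 (fun y => mψn y • grad3 μc1 y) x)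
    (hbc : ∀ x ∈ frontier Ω, vn x = 0 ∧ dot3 (nv x) (grad3 μc1 x) = 0) :
    ∫ x in Ω, ((ψ1 x + ζρ * (1 - ψ1 x)) - (ψn x + ζρ * (1 - ψn x))) / δt = 0 := by
  classical
  -- the auxiliary vector field
  set u : (Fin 3 → ℝ) → Fin 3 → ℝ :=
    fun x j => -ζρ * vn x j - (1 - ζρ) * (ψ1 x * vn x j) with hudef
  have hu_smooth : ∀ j, ContDiff ℝ (⊤ : ℕ∞) fun y => u y j := fun j =>
    (contDiff_const.mul (hvn j)).sub (contDiff_const.mul (hψ1.mul (hvn j)))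
  have hu0 : ∀ j, ∀ x ∈ frontier Ω, u x j = 0 := by
    intro j x hx
    have hv0 : vn x j = 0 := by rw [(hbc x hx).1]; rfl
    simp [hudef, hv0]
  have hαζ : α * ζρ = ζρ - 1 := by
    rw [hα]; field_simp
  -- pointwise identity on Ω
  have hpt : Set.EqOn
      (fun x => ((ψ1 x + ζρ * (1 - ψ1 x)) - (ψn x + ζρ * (1 - ψn x))) / δt)
      (div3 u) Ω := by
    intro x hx
    have h1 := hquasi x hx
    have h2 := hphase x hx
    have hdivu : div3 u x
        = -ζρ * div3 vn x - (1 - ζρ) * div3 (fun y => ψ1 y • vn y) x := by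
      unfold div3
      have hterm : ∀ j : Fin 3, pd3 j (fun y => u y j) x
          = -ζρ * pd3 j (fun y => vn y j) x
            - (1 - ζρ) * pd3 j (fun y => ψ1 y * vn y j) x := by
        intro j
        exact pd3_mul_sub j (-ζρ) (1 - ζρ) (fun y => vn y j) (fun y => ψ1 y * vn y j)
          (hvn j) (hψ1.mul (hvn j)) x
      have hsmul : ∀ j : Fin 3, pd3 j (fun y => (ψ1 y • vn y) j) x
          = pd3 j (fun y => ψ1 y * vn y j) x := fun j => rfl
      simp only [hterm, hsmul, Finset.sum_sub_distrib, Finset.mul_sum]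
    rw [hdivu]
    linear_combination (1 - ζρ) * h2 + ζρ * h1
      + (div3 (fun y => mψn y • grad3 μc1 y) x / Peψ) * hαζ
  rw [MeasureTheory.setIntegral_congr_fun hΩopen.measurableSet hpt]
  have hdiv_eq : ∀ x, div3 u x = ∑ j : Fin 3, pd3 j (fun y => u y j) x := fun _ => rfl
  calc ∫ x in Ω, div3 u x
      = ∫ x in Ω, ∑ j : Fin 3, pd3 j (fun y => u y j) x := by
        simp only [hdiv_eq]
    _ = ∑ j : Fin 3, ∫ x in Ω, pd3 j (fun y => u y j) x := by
        apply MeasureTheory.integral_finset_sum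
        intro j _
        exact integrableOn_of_isBounded hΩbdd
          (((hu_smooth j).continuous_fderiv (by simp)).clm_apply continuous_const)
    _ = 0 := by
        apply Finset.sum_eq_zero
        intro j _
        exact setIntegral_pd3_eq_zero hΩopen hΩbdd (hu_smooth j) (hu0 j) j
end
end

section
/- Let ψⁿ, ψ^{n+1} be continuously differentiable functions of space in ℝ³, let vⁿ be a continuously differentiable vector field, let g be a continuous function, and let δt > 0. Suppose (ψ^{n+1} − ψⁿ)/δt + ∇·(ψ^{n+1} vⁿ) = g and ∇·vⁿ = α g pointwise, where α = (ζ_ρ − 1)/ζ_ρ for a constant ζ_ρ ≠ 0. Then with ρᵐ = ψᵐ + ζ_ρ(1 − ψᵐ), the discrete continuity equation (ρ^{n+1} − ρⁿ)/δt + ∇·(ρ^{n+1} vⁿ) = 0 holds pointwise. -/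
noncomputable section
open scoped BigOperators

/-!
Since `ρᵐ = (1 - ζ_ρ) ψᵐ + ζ_ρ` is affine in `ψᵐ`, linearity of the divergence gives
`∇·(ρ^{n+1} vⁿ) = (1 - ζ_ρ) ∇·(ψ^{n+1} vⁿ) + ζ_ρ ∇·vⁿ`, while
`(ρ^{n+1} - ρⁿ)/δt = (1 - ζ_ρ)(ψ^{n+1} - ψⁿ)/δt`. Substituting the phase equation and
`∇·vⁿ = α g`, the left-hand side becomes `(1 - ζ_ρ + ζ_ρ α) g`, and `ζ_ρ α = ζ_ρ - 1`.
-/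

section Linearity

variable {i : Fin 3} {f h : (Fin 3 → ℝ) → ℝ} {u w : (Fin 3 → ℝ) → Fin 3 → ℝ} {x : Fin 3 → ℝ}

theorem pd3_add (hf : DifferentiableAt ℝ f x) (hh : DifferentiableAt ℝ h x) :
    pd3 i (fun y => f y + h y) x = pd3 i f x + pd3 i h x := by
  simp only [pd3, fderiv_fun_add hf hh, add_apply]

theorem pd3_const_mul (c : ℝ) : pd3 i (fun y => c * f y) x = c * pd3 i f x := by
  change fderiv ℝ (c • f) x _ = _
  rw [fderiv_const_smul_field, pd3]
  rfl

theorem div3_add (hu : ∀ j, DifferentiableAt ℝ (fun y => u y j) x)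
    (hw : ∀ j, DifferentiableAt ℝ (fun y => w y j) x) :
    div3 (fun y => u y + w y) x = div3 u x + div3 w x := by
  simp only [div3, Pi.add_apply, pd3_add (hu _) (hw _), Finset.sum_add_distrib]

theorem div3_const_smul (c : ℝ) : div3 (fun y => c • u y) x = c * div3 u x := by
  simp only [div3, Pi.smul_apply, smul_eq_mul, pd3_const_mul, Finset.mul_sum]

end Linearity

theorem div3_affine_smul (ζ : ℝ) {ψ : (Fin 3 → ℝ) → ℝ} {v : (Fin 3 → ℝ) → Fin 3 → ℝ}
    {x : Fin 3 → ℝ} (hψ : DifferentiableAt ℝ ψ x)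
    (hv : ∀ j, DifferentiableAt ℝ (fun y => v y j) x) :
    div3 (fun y => (ψ y + ζ * (1 - ψ y)) • v y) x
      = (1 - ζ) * div3 (fun y => ψ y • v y) x + ζ * div3 v x := by
  have hsplit : (fun y => (ψ y + ζ * (1 - ψ y)) • v y)
      = fun y => (1 - ζ) • (ψ y • v y) + ζ • v y := by
    funext y
    rw [smul_smul, ← add_smul]
    ring_nf
  have hψv : ∀ j, DifferentiableAt ℝ (fun y => ((1 - ζ) • (ψ y • v y)) j) x := fun j =>
    (hψ.mul (hv j)).const_mul _
  have hζv : ∀ j, DifferentiableAt ℝ (fun y => (ζ • v y) j) x := fun j => (hv j).const_mul _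
  rw [hsplit, div3_add hψv hζv, div3_const_smul, div3_const_smul]

theorem discrete_continuity_equation_general
    (ζρ : ℝ) (hζρ : ζρ ≠ 0) (α : ℝ) (hα : α = (ζρ - 1) / ζρ)
    (δt : ℝ)
    (ψn ψ1 : (Fin 3 → ℝ) → ℝ) (vn : (Fin 3 → ℝ) → Fin 3 → ℝ)
    (g : (Fin 3 → ℝ) → ℝ)
    (hψ1 : ContDiff ℝ 1 ψ1)
    (hvn : ∀ j, ContDiff ℝ 1 fun x => vn x j)
    (hphase : ∀ x, (ψ1 x - ψn x) / δt + div3 (fun y => ψ1 y • vn y) x = g x)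
    (hdiv : ∀ x, div3 vn x = α * g x) :
    ∀ x,
      ((ψ1 x + ζρ * (1 - ψ1 x)) - (ψn x + ζρ * (1 - ψn x))) / δt
        + div3 (fun y => (ψ1 y + ζρ * (1 - ψ1 y)) • vn y) x = 0 := by
  intro x
  have hζα : ζρ * α = ζρ - 1 := by rw [hα]; field_simp
  rw [div3_affine_smul ζρ (hψ1.differentiable one_ne_zero x)
    (fun j => (hvn j).differentiable one_ne_zero x), hdiv x]
  linear_combination (1 - ζρ) * hphase x + g x * hζα

/-- **Discrete continuity equation for the semi-implicit scheme.**
If `(ψ^{n+1} − ψⁿ)/δt + ∇·(ψ^{n+1} vⁿ) = g` and `∇·vⁿ = α g` pointwise, with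
`α = (ζ_ρ − 1)/ζ_ρ`, then with `ρᵐ = ψᵐ + ζ_ρ(1 − ψᵐ)` the discrete continuity
equation `(ρ^{n+1} − ρⁿ)/δt + ∇·(ρ^{n+1} vⁿ) = 0` holds pointwise. -/
theorem discrete_continuity_equation
    (ζρ : ℝ) (hζρ : ζρ ≠ 0) (α : ℝ) (hα : α = (ζρ - 1) / ζρ)
    (δt : ℝ) (hδt : 0 < δt)
    (ψn ψ1 : (Fin 3 → ℝ) → ℝ) (vn : (Fin 3 → ℝ) → Fin 3 → ℝ)
    (g : (Fin 3 → ℝ) → ℝ)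
    (hψn : ContDiff ℝ 1 ψn) (hψ1 : ContDiff ℝ 1 ψ1)
    (hvn : ∀ j, ContDiff ℝ 1 fun x => vn x j)
    (hg : Continuous g)
    (hphase : ∀ x, (ψ1 x - ψn x) / δt + div3 (fun y => ψ1 y • vn y) x = g x)
    (hdiv : ∀ x, div3 vn x = α * g x) :
    ∀ x,
      ((ψ1 x + ζρ * (1 - ψ1 x)) - (ψn x + ζρ * (1 - ψn x))) / δt
        + div3 (fun y => (ψ1 y + ζρ * (1 - ψ1 y)) • vn y) x = 0 :=
  discrete_continuity_equation_general ζρ hζρ α hα δt ψn ψ1 vn g hψ1 hvn hphase hdiv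
end
end

section
/- Let ψ be a twice continuously differentiable real-valued function and v a continuously differentiable vector field on an open subset of ℝ³. Then the pointwise identity −(v·∇ψ) Δψ = −∇·((∇ψ ⊗ ∇ψ)·v) + (∇ψ ⊗ ∇ψ) : ∇v + v·∇(|∇ψ|²/2) holds, where Δ is the Laplacian, (∇ψ ⊗ ∇ψ)_{ij} = ∂_iψ ∂_jψ, ((∇ψ⊗∇ψ)·v)_i = Σ_j ∂_iψ ∂_jψ v_j, and (∇ψ⊗∇ψ):∇v = Σ_{i,j} ∂_iψ ∂_jψ ∂_i v_j. -/
/-!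
Write `g = ∇ψ`, `H = ∇²ψ` and `S = v·∇ψ`. By the product rule,
`∇·((∇ψ⊗∇ψ)·v) = (Δψ) S + g·(H v) + (∇ψ⊗∇ψ) : ∇v`, and, because the Hessian of a `C²`
function is symmetric, `∇(|∇ψ|²/2) = H g`. The stress terms cancel, and `v·(H g) = g·(H v)`
cancels the remaining Hessian term, leaving `-S Δψ`.
-/

noncomputable section
open scoped BigOperators

/-- Laplacian of a scalar field on `ℝ³`. -/
def lap3 (f : (Fin 3 → ℝ) → ℝ) (x : Fin 3 → ℝ) : ℝ :=
  div3 (fun y => grad3 f y) x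


open Finset

theorem ContDiffAt.differentiableAt_fderiv {𝕜 E F : Type*} [NontriviallyNormedField 𝕜]
    [NormedAddCommGroup E] [NormedSpace 𝕜 E] [NormedAddCommGroup F] [NormedSpace 𝕜 F]
    {f : E → F} {x : E} (hf : ContDiffAt 𝕜 2 f x) :
    DifferentiableAt 𝕜 (fderiv 𝕜 f) x :=
  (hf.fderiv_right (m := 1) (by norm_num)).differentiableAt one_ne_zero

section PartialDerivatives

variable {x : Fin 3 → ℝ}

theorem pd3_mul {f g : (Fin 3 → ℝ) → ℝ} (i : Fin 3)
    (hf : DifferentiableAt ℝ f x) (hg : DifferentiableAt ℝ g x) :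
    pd3 i (fun y => f y * g y) x = pd3 i f x * g x + f x * pd3 i g x := by
  simp only [pd3, fderiv_fun_mul hf hg, add_apply, smul_apply, smul_eq_mul]
  ring

theorem pd3_sum {F : Fin 3 → (Fin 3 → ℝ) → ℝ} (i : Fin 3)
    (hF : ∀ j, DifferentiableAt ℝ (F j) x) :
    pd3 i (fun y => ∑ j, F j y) x = ∑ j, pd3 i (F j) x := by
  simp only [pd3, fderiv_fun_sum fun j _ => hF j, _root_.sum_apply]

theorem pd3_div_const {f : (Fin 3 → ℝ) → ℝ} (i : Fin 3) (hf : DifferentiableAt ℝ f x) (c : ℝ) :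
    pd3 i (fun y => f y / c) x = pd3 i f x / c := by
  simp only [pd3, div_eq_mul_inv, fderiv_mul_const hf, smul_apply, smul_eq_mul, mul_comm]

theorem pd3_dot3 {a b : (Fin 3 → ℝ) → Fin 3 → ℝ} (i : Fin 3)
    (ha : ∀ j, DifferentiableAt ℝ (fun y => a y j) x)
    (hb : ∀ j, DifferentiableAt ℝ (fun y => b y j) x) :
    pd3 i (fun y => dot3 (a y) (b y)) x
      = ∑ j, (pd3 i (fun y => a y j) x * b x j + a x j * pd3 i (fun y => b y j) x) := by
  unfold dot3
  rw [pd3_sum i fun j => (ha j).fun_mul (hb j)]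
  exact sum_congr rfl fun j _ => pd3_mul i (ha j) (hb j)

variable {ψ : (Fin 3 → ℝ) → ℝ}

theorem differentiableAt_pd3 (hψ : ContDiffAt ℝ 2 ψ x) (j : Fin 3) :
    DifferentiableAt ℝ (pd3 j ψ) x :=
  hψ.differentiableAt_fderiv.clm_apply (differentiableAt_const _)

theorem pd3_pd3_eq_fderiv_fderiv (hψ : ContDiffAt ℝ 2 ψ x) (i j : Fin 3) :
    pd3 i (pd3 j ψ) x = fderiv ℝ (fderiv ℝ ψ) x (Pi.single i 1) (Pi.single j 1) := by
  unfold pd3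
  rw [fderiv_clm_apply hψ.differentiableAt_fderiv (differentiableAt_const _)]
  simp only [fderiv_fun_const, Pi.zero_apply, ContinuousLinearMap.comp_zero, zero_add,
    ContinuousLinearMap.flip_apply]

theorem pd3_pd3_comm (hψ : ContDiffAt ℝ 2 ψ x) (i j : Fin 3) :
    pd3 i (pd3 j ψ) x = pd3 j (pd3 i ψ) x := by
  rw [pd3_pd3_eq_fderiv_fderiv hψ, pd3_pd3_eq_fderiv_fderiv hψ]
  exact hψ.isSymmSndFDerivAt (by simp [minSmoothness_of_isRCLikeNormedField]) _ _

theorem grad3_half_sq_grad3 (hψ : ContDiffAt ℝ 2 ψ x) :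
    grad3 (fun y => dot3 (grad3 ψ y) (grad3 ψ y) / 2) x
      = fun j => ∑ k, pd3 k ψ x * pd3 k (pd3 j ψ) x := by
  funext j
  show pd3 j _ x = _
  have hgrad : ∀ k, DifferentiableAt ℝ (fun y => grad3 ψ y k) x := differentiableAt_pd3 hψ
  have hsq : DifferentiableAt ℝ (fun y => dot3 (grad3 ψ y) (grad3 ψ y)) x :=
    DifferentiableAt.fun_sum fun k _ => (hgrad k).mul (hgrad k)
  rw [pd3_div_const j hsq, pd3_dot3 j hgrad hgrad, div_eq_iff two_ne_zero, sum_mul]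
  refine sum_congr rfl fun k _ => ?_
  simp only [grad3, pd3_pd3_comm hψ k j]
  ring

end PartialDerivatives

theorem capillary_identity_algebraic {ι : Type*} [Fintype ι] (g w : ι → ℝ) (H D : ι → ι → ℝ) :
    -(∑ i, w i * g i) * ∑ i, H i i
      = -∑ i, (H i i * ∑ j, g j * w j + g i * ∑ j, (H i j * w j + g j * D i j))
        + ∑ i, ∑ j, g i * g j * D i j + ∑ j, w j * ∑ k, g k * H k j := by
  have hswap : ∑ j, w j * ∑ k, g k * H k j = ∑ i, g i * ∑ j, H i j * w j := by
    simp only [mul_sum]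
    rw [sum_comm]
    exact sum_congr rfl fun i _ => sum_congr rfl fun j _ => by ring
  have hstress : ∑ i, g i * ∑ j, g j * D i j = ∑ i, ∑ j, g i * g j * D i j := by
    simp only [mul_sum, mul_assoc]
  have hdot : ∑ j, g j * w j = ∑ i, w i * g i := sum_congr rfl fun i _ => mul_comm _ _
  rw [hswap, ← hstress, hdot]
  simp only [mul_add, sum_add_distrib, ← sum_mul]
  ring

section Pointwise

variable {x : Fin 3 → ℝ} {ψ : (Fin 3 → ℝ) → ℝ} {v : (Fin 3 → ℝ) → Fin 3 → ℝ}

theorem pd3_capillary_flux (hψ : ContDiffAt ℝ 2 ψ x)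
    (hv : ∀ j, DifferentiableAt ℝ (fun y => v y j) x) (i : Fin 3) :
    pd3 i (fun y => pd3 i ψ y * ∑ j, pd3 j ψ y * v y j) x
      = pd3 i (pd3 i ψ) x * ∑ j, pd3 j ψ x * v x j
        + pd3 i ψ x * ∑ j, (pd3 i (pd3 j ψ) x * v x j + pd3 j ψ x * pd3 i (fun y => v y j) x) := by
  have hdot : DifferentiableAt ℝ (fun y => ∑ j, pd3 j ψ y * v y j) x :=
    DifferentiableAt.fun_sum fun j _ => (differentiableAt_pd3 hψ j).mul (hv j)
  rw [pd3_mul i (differentiableAt_pd3 hψ i) hdot]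
  congr 2
  exact pd3_dot3 (a := grad3 ψ) i (differentiableAt_pd3 hψ) hv

theorem transported_laplacian_identity_at (hψ : ContDiffAt ℝ 2 ψ x)
    (hv : ∀ j, DifferentiableAt ℝ (fun y => v y j) x) :
    -(dot3 (v x) (grad3 ψ x)) * lap3 ψ x
      = -div3 (fun y i => pd3 i ψ y * (∑ j, pd3 j ψ y * v y j)) x
        + (∑ i, ∑ j, pd3 i ψ x * pd3 j ψ x * pd3 i (fun y => v y j) x)
        + dot3 (v x) (grad3 (fun y => dot3 (grad3 ψ y) (grad3 ψ y) / 2) x) := by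
  rw [grad3_half_sq_grad3 hψ]
  simp only [lap3, div3, grad3, dot3, pd3_capillary_flux hψ hv]
  exact capillary_identity_algebraic (fun k => pd3 k ψ x) (v x) (fun i j => pd3 i (pd3 j ψ) x)
    fun i j => pd3 i (fun y => v y j) x

end Pointwise

/-- **Capillary-stress identity for the transported Laplacian term.**
Pointwise, `−(v·∇ψ) Δψ = −∇·((∇ψ⊗∇ψ)·v) + (∇ψ⊗∇ψ) : ∇v + v·∇(|∇ψ|²/2)`. -/
theorem transported_laplacian_identity
    (U : Set (Fin 3 → ℝ)) (hU : IsOpen U)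
    (ψ : (Fin 3 → ℝ) → ℝ) (v : (Fin 3 → ℝ) → Fin 3 → ℝ)
    (hψ : ContDiffOn ℝ 2 ψ U)
    (hv : ∀ j, ContDiffOn ℝ 1 (fun x => v x j) U) :
    ∀ x ∈ U,
      -(dot3 (v x) (grad3 ψ x)) * lap3 ψ x
        = -div3 (fun y i => pd3 i ψ y * (∑ j, pd3 j ψ y * v y j)) x
          + (∑ i, ∑ j, pd3 i ψ x * pd3 j ψ x * pd3 i (fun y => v y j) x)
          + dot3 (v x) (grad3 (fun y => dot3 (grad3 ψ y) (grad3 ψ y) / 2) x) := by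
  intro x hx
  have hUx : U ∈ nhds x := hU.mem_nhds hx
  exact transported_laplacian_identity_at (hψ.contDiffAt hUx)
    fun j => ((hv j).contDiffAt hUx).differentiableAt one_ne_zero
end
end

section
/- Let T > 0, k ≥ 0, m ≥ 0 be real-valued continuous functions on a measurable set V ⊂ ℝ³, let ∇T and ∇μ be continuous vector fields, let μ_vis ≥ 0 be a continuous function, and let A be a continuous 3×3-matrix-valued field with τ = μ_vis(A + Aᵀ) − (2/3)μ_vis(tr A)I. Then the entropy production S_inc = ∫_V { k |∇T|²/T² + (τ : A)/T + m |∇μ|²/T } dx is nonnegative. -/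
/-!
The integrand is nonnegative pointwise. The heat-conduction and diffusion terms are nonnegative
multiples of squares. For the viscous term, with `S` the symmetric part of `A`,
`τ : A = 2 μ_vis (|S|² - (tr S)² / 3)`, and `(tr S)² ≤ 3 ∑ Sᵢᵢ² ≤ 3 |S|²` by Cauchy–Schwarz.
-/

noncomputable section
open scoped BigOperators
open MeasureTheory

lemma dot3_self_nonneg (a : Fin 3 → ℝ) : 0 ≤ dot3 a a :=
  Finset.sum_nonneg fun i _ => mul_self_nonneg (a i)

namespace Matrix

variable {n : Type*} [Fintype n]

lemma sum_sum_add_transpose_mul_self (A : Matrix n n ℝ) :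
    ∑ i, ∑ j, (A i j + A j i) * A i j = (∑ i, ∑ j, (A i j + A j i) ^ 2) / 2 := by
  have hswap : ∑ i, ∑ j, (A i j + A j i) * A j i = ∑ i, ∑ j, (A i j + A j i) * A i j := by
    rw [Finset.sum_comm]
    simp only [add_comm]
  have hsq : ∑ i, ∑ j, (A i j + A j i) ^ 2
      = ∑ i, ∑ j, (A i j + A j i) * A i j + ∑ i, ∑ j, (A i j + A j i) * A j i := by
    simp only [← Finset.sum_add_distrib, sq, mul_add]
  linarith

lemma four_mul_sum_diag_sq_le (A : Matrix n n ℝ) :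
    4 * ∑ i, A i i ^ 2 ≤ ∑ i, ∑ j, (A i j + A j i) ^ 2 := by
  rw [Finset.mul_sum]
  gcongr with i
  calc 4 * A i i ^ 2 = (A i i + A i i) ^ 2 := by ring
    _ ≤ ∑ j, (A i j + A j i) ^ 2 :=
      Finset.single_le_sum (f := fun j => (A i j + A j i) ^ 2)
        (fun j _ => sq_nonneg _) (Finset.mem_univ i)

lemma two_div_card_mul_trace_sq_le (A : Matrix n n ℝ) :
    2 / Fintype.card n * A.trace ^ 2 ≤ ∑ i, ∑ j, (A i j + A j i) * A i j := by
  rw [sum_sum_add_transpose_mul_self]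
  have hdiag := four_mul_sum_diag_sq_le A
  rcases (Nat.cast_nonneg (Fintype.card n) : (0 : ℝ) ≤ _).eq_or_lt with hcard | hcard
  · rw [← hcard, div_zero, zero_mul]
    exact div_nonneg (Finset.sum_nonneg fun i _ => Finset.sum_nonneg fun j _ => sq_nonneg _)
      zero_le_two
  · have hcs : A.trace ^ 2 ≤ Fintype.card n * ∑ i, A i i ^ 2 :=
      sq_sum_le_card_mul_sum_sq
    rw [div_mul_eq_mul_div, div_le_iff₀ hcard]
    nlinarith

variable [DecidableEq n]

def viscousStress (μ : ℝ) (A : Matrix n n ℝ) : Matrix n n ℝ :=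
  μ • (A + Aᵀ) - (2 / Fintype.card n * μ * A.trace) • 1

lemma viscousStress_apply (μ : ℝ) (A : Matrix n n ℝ) (i j : n) :
    viscousStress μ A i j
      = μ * (A i j + A j i) - 2 / Fintype.card n * μ * A.trace * (if i = j then 1 else 0) := by
  simp [viscousStress, one_apply, mul_add]

lemma sum_sum_viscousStress_mul_nonneg {μ : ℝ} (hμ : 0 ≤ μ) (A : Matrix n n ℝ) :
    0 ≤ ∑ i, ∑ j, viscousStress μ A i j * A i j := by
  have hexpand : ∑ i, ∑ j, viscousStress μ A i j * A i j
      = μ * (∑ i, ∑ j, (A i j + A j i) * A i j - 2 / Fintype.card n * A.trace ^ 2) := by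
    simp only [viscousStress_apply, sub_mul, Finset.sum_sub_distrib, mul_assoc, ← Finset.mul_sum,
      ite_mul, one_mul, zero_mul, mul_ite, mul_zero, Finset.sum_ite_eq, Finset.mem_univ, if_true]
    simp only [trace, diag, sq]
    ring
  rw [hexpand]
  exact mul_nonneg hμ (sub_nonneg.mpr (two_div_card_mul_trace_sq_le A))

end Matrix

theorem entropy_production_nonneg_general
    (V : Set (Fin 3 → ℝ)) (hV : MeasurableSet V)
    (T k m μvis : (Fin 3 → ℝ) → ℝ)
    (hTpos : ∀ x ∈ V, 0 < T x) (hk0 : ∀ x ∈ V, 0 ≤ k x)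
    (hm0 : ∀ x ∈ V, 0 ≤ m x) (hμ0 : ∀ x ∈ V, 0 ≤ μvis x)
    (gT gμ : (Fin 3 → ℝ) → Fin 3 → ℝ)
    (A : (Fin 3 → ℝ) → Fin 3 → Fin 3 → ℝ)
    (τ : (Fin 3 → ℝ) → Fin 3 → Fin 3 → ℝ)
    (hτ : ∀ x i j, τ x i j
      = μvis x * (A x i j + A x j i)
        - (2 / 3) * μvis x * (∑ l, A x l l) * (if i = j then 1 else 0)) :
    0 ≤ ∫ x in V,
        (k x * dot3 (gT x) (gT x) / (T x) ^ 2
          + (∑ i, ∑ j, τ x i j * A x i j) / T x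
          + m x * dot3 (gμ x) (gμ x) / T x) := by
  refine setIntegral_nonneg hV fun x hx => ?_
  have hT := hTpos x hx
  have hdissipation : 0 ≤ ∑ i, ∑ j, τ x i j * A x i j := by
    have hτx : ∀ i j, τ x i j = Matrix.viscousStress (μvis x) (Matrix.of (A x)) i j :=
      fun i j => by norm_num [hτ, Matrix.viscousStress_apply, Matrix.trace]
    simpa only [hτx, Matrix.of_apply] using
      Matrix.sum_sum_viscousStress_mul_nonneg (hμ0 x hx) (Matrix.of (A x))
  have hheat : 0 ≤ k x * dot3 (gT x) (gT x) / T x ^ 2 :=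
    div_nonneg (mul_nonneg (hk0 x hx) (dot3_self_nonneg _)) (sq_nonneg _)
  have hdiffusion : 0 ≤ m x * dot3 (gμ x) (gμ x) / T x :=
    div_nonneg (mul_nonneg (hm0 x hx) (dot3_self_nonneg _)) hT.le
  have hviscous := div_nonneg hdissipation hT.le
  linarith

/-- **Nonnegativity of the entropy production.** For continuous fields
`T > 0`, `k ≥ 0`, `m ≥ 0`, `μ_vis ≥ 0` on a measurable `V ⊂ ℝ³`, continuous
vector fields `∇T`, `∇μ`, and a continuous matrix field `A` with deviatoric
stress `τ = μ_vis(A + Aᵀ) − (2/3)μ_vis(tr A)I`, the entropy production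
`S_inc = ∫_V { k|∇T|²/T² + (τ:A)/T + m|∇μ|²/T } dx` is nonnegative. -/
theorem entropy_production_nonneg
    (V : Set (Fin 3 → ℝ)) (hV : MeasurableSet V)
    (T k m μvis : (Fin 3 → ℝ) → ℝ)
    (hT : ContinuousOn T V) (hk : ContinuousOn k V)
    (hm : ContinuousOn m V) (hμvis : ContinuousOn μvis V)
    (hTpos : ∀ x ∈ V, 0 < T x) (hk0 : ∀ x ∈ V, 0 ≤ k x)
    (hm0 : ∀ x ∈ V, 0 ≤ m x) (hμ0 : ∀ x ∈ V, 0 ≤ μvis x)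
    (gT gμ : (Fin 3 → ℝ) → Fin 3 → ℝ)
    (hgT : ∀ i, ContinuousOn (fun x => gT x i) V)
    (hgμ : ∀ i, ContinuousOn (fun x => gμ x i) V)
    (A : (Fin 3 → ℝ) → Fin 3 → Fin 3 → ℝ)
    (hA : ∀ i j, ContinuousOn (fun x => A x i j) V)
    (τ : (Fin 3 → ℝ) → Fin 3 → Fin 3 → ℝ)
    (hτ : ∀ x i j, τ x i j
      = μvis x * (A x i j + A x j i)
        - (2 / 3) * μvis x * (∑ l, A x l l) * (if i = j then 1 else 0)) :
    0 ≤ ∫ x in V,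
        (k x * dot3 (gT x) (gT x) / (T x) ^ 2
          + (∑ i, ∑ j, τ x i j * A x i j) / T x
          + m x * dot3 (gμ x) (gμ x) / T x) :=
  entropy_production_nonneg_general V hV T k m μvis hTpos hk0 hm0 hμ0 gT gμ A τ hτ
end
end
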